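/- arXiv:2504.18433 — 6 statements merged into one kernel-verified Lean document; each statement's English description precedes it below -/
import Mathlib

section
/- There exists a probability measure Q on ℝ × (0,∞) that is not a Dirac measure but whose first coordinate has zero variance, i.e. Var_Q(μ) = 0 where μ denotes the first coordinate. Consequently, for a Gaussian predictive distribution N(μ, v), the variance-based epistemic uncertainty EU(Q) = Var_Q(μ) vanishes for some second-order distribution Q that is not a point mass. -/
open MeasureTheory ProbabilityTheory

/-- There exists a second-order distribution `Q` over the parameters `(μ, v)` of a
Gaussian predictive distribution which is not a Dirac measure but whose first coordinate
has zero variance; hence the variance-based epistemic uncertainty `EU(Q) = Var_Q(μ)`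
vanishes for a non-degenerate `Q`, violating axiom A1. -/
theorem variance_EU_violates_A1 :
    ∃ Q : Measure (ℝ × ℝ), IsProbabilityMeasure Q ∧
      (∀ᵐ p ∂Q, 0 < p.2) ∧
      (∀ θ : ℝ × ℝ, Q ≠ Measure.dirac θ) ∧
      variance (fun p : ℝ × ℝ => p.1) Q = 0 := by
  set a : ℝ × ℝ := (0, 1)
  set b : ℝ × ℝ := (0, 2)
  set Q : Measure (ℝ × ℝ) :=
    (1/2 : ENNReal) • Measure.dirac a + (1/2 : ENNReal) • Measure.dirac b with hQ
  have hab : a ≠ b := by simp [a, b]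
  have hprob : IsProbabilityMeasure Q := by
    constructor
    simp only [hQ, Measure.add_apply, Measure.smul_apply, smul_eq_mul, measure_univ, mul_one]
    rw [ENNReal.div_add_div_same, one_add_one_eq_two, ENNReal.div_self two_ne_zero ENNReal.ofNat_ne_top]
  have hmfst : MeasurableSet {p : ℝ × ℝ | p.1 ≠ 0} :=
    (measurableSet_eq_fun (measurable_fst) measurable_const).compl
  have hafst : (Measure.dirac a) {p : ℝ × ℝ | p.1 ≠ 0} = 0 := by
    rw [Measure.dirac_apply' _ hmfst]
    simp [a, Set.indicator_apply]
  have hbfst : (Measure.dirac b) {p : ℝ × ℝ | p.1 ≠ 0} = 0 := by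
    rw [Measure.dirac_apply' _ hmfst]
    simp [b, Set.indicator_apply]
  have hae : (fun p : ℝ × ℝ => p.1) =ᵐ[Q] (fun _ => (0 : ℝ)) := by
    refine ae_iff.2 ?_
    simp only [hQ, Measure.add_apply, Measure.smul_apply, smul_eq_mul]
    have : {p : ℝ × ℝ | ¬ (fun p : ℝ × ℝ => p.1) p = (fun _ => (0:ℝ)) p}
        = {p : ℝ × ℝ | p.1 ≠ 0} := rfl
    rw [this, hafst, hbfst]
    simp
  refine ⟨Q, hprob, ?_, ?_, ?_⟩
  · -- a.e. 0 < p.2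
    have hm : MeasurableSet {p : ℝ × ℝ | ¬ 0 < p.2} :=
      (measurableSet_lt measurable_const measurable_snd).compl
    refine ae_iff.2 ?_
    have ha' : (Measure.dirac a) {p : ℝ × ℝ | ¬ 0 < p.2} = 0 := by
      rw [Measure.dirac_apply' _ hm]
      simp [a, Set.indicator_apply]
    have hb' : (Measure.dirac b) {p : ℝ × ℝ | ¬ 0 < p.2} = 0 := by
      rw [Measure.dirac_apply' _ hm]
      simp [b, Set.indicator_apply]
    simp only [hQ, Measure.add_apply, Measure.smul_apply, smul_eq_mul]
    rw [ha', hb']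
    simp
  · -- not dirac
    intro θ hθ
    have hsing : Q {θ} = 1 := by rw [hθ]; simp
    have hmθ : MeasurableSet ({θ} : Set (ℝ × ℝ)) := measurableSet_singleton θ
    have hQθ : Q {θ} = (1/2 : ENNReal) * (Measure.dirac a) {θ}
        + (1/2 : ENNReal) * (Measure.dirac b) {θ} := by
      simp [hQ, Measure.add_apply]
    have ha : (Measure.dirac a) {θ} = if a = θ then 1 else 0 := by
      rw [Measure.dirac_apply' _ hmθ]; simp [Set.indicator_apply, eq_comm]
    have hb : (Measure.dirac b) {θ} = if b = θ then 1 else 0 := by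
      rw [Measure.dirac_apply' _ hmθ]; simp [Set.indicator_apply, eq_comm]
    rw [ha, hb] at hQθ
    by_cases h1 : a = θ <;> by_cases h2 : b = θ
    · exact hab (h1.trans h2.symm)
    · rw [hQθ] at hsing; simp only [h1, h2, if_true, if_false] at hsing
      rw [mul_one, mul_zero, add_zero] at hsing
      norm_num at hsing
    · rw [hQθ] at hsing; simp only [h1, h2, if_true, if_false] at hsing
      rw [mul_one, mul_zero, zero_add] at hsing
      norm_num at hsing
    · rw [hQθ] at hsing; simp only [h1, h2, if_false, mul_zero, add_zero] at hsing
      norm_num at hsing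
  · -- variance = 0
    have hint : (∫ p, (fun p : ℝ × ℝ => p.1) p ∂Q) = 0 := by
      rw [integral_congr_ae hae]; simp
    have hev : evariance (fun p : ℝ × ℝ => p.1) Q = 0 := by
      rw [evariance_eq_zero_iff (measurable_fst.aemeasurable)]
      rw [hint]
      exact hae
    rw [variance, hev, ENNReal.toReal_zero]
end

section
/- Let Q be the Pareto distribution with scale 1 and shape α = 3/2, i.e. with density f(λ) = (3/2)·λ^{−5/2} on [1,∞). Then: (i) Q has infinite second moment, ∫₁^∞ λ²·f(λ) dλ = ∞ (so Q has infinite variance); and (ii) with λ̄ = ∫ λ dQ = 3, the entropy-based epistemic uncertainty for an exponential predictive distribution equals ∫ KL(Exp(λ) ‖ Exp(3)) dQ(λ) = 22/15 − log 3, where KL(Exp(λ) ‖ Exp(λ')) = log λ − log λ' + λ'/λ − 1. -/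
/-!
Against the Pareto density `α x^{-(α+1)}` on `(1, ∞)`, the `n`-th moment integrand is the power
`α x^{n-α-1}`, which is integrable exactly when `n < α`; the mean is `α / (α - 1)`. The
integrand `KL(Exp(x) ‖ Exp(m)) = log x - log m + m/x - 1` is a combination of `log x`, `1` and
`1/x`, so its expectation reduces to integrals of powers and to
`∫₁^∞ log x · x^s dx = 1/(s+1)²`, which follows from the antiderivative
`x^{s+1} (log x/(s+1) - 1/(s+1)²)`.
-/

open MeasureTheory Real Set Filter

section LogMulRpow

variable {s : ℝ}

lemma hasDerivAt_rpow_mul_log_sub (hs : s + 1 ≠ 0) {x : ℝ} (hx : 0 < x) :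
    HasDerivAt (fun y : ℝ => y ^ (s + 1) * (log y / (s + 1) - 1 / (s + 1) ^ 2))
      (log x * x ^ s) x := by
  have hpow : HasDerivAt (fun y : ℝ => y ^ (s + 1)) ((s + 1) * x ^ s) x := by
    simpa using hasDerivAt_rpow_const (p := s + 1) (Or.inl hx.ne')
  have hlog : HasDerivAt (fun y : ℝ => log y / (s + 1) - 1 / (s + 1) ^ 2) (x⁻¹ / (s + 1)) x :=
    ((hasDerivAt_log hx.ne').div_const _).sub_const _
  refine (hpow.mul hlog).congr_deriv ?_
  rw [rpow_add_one hx.ne']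
  field_simp
  ring

lemma tendsto_rpow_mul_log_sub_atTop (hs : s < -1) :
    Tendsto (fun y : ℝ => y ^ (s + 1) * (log y / (s + 1) - 1 / (s + 1) ^ 2)) atTop (nhds 0) := by
  have hpow : Tendsto (fun y : ℝ => y ^ (s + 1)) atTop (nhds 0) := by
    simpa using tendsto_rpow_neg_atTop (y := -(s + 1)) (by linarith)
  have hlog : Tendsto (fun y : ℝ => log y * y ^ (s + 1)) atTop (nhds 0) := by
    refine ((isLittleO_log_rpow_atTop (r := -(s + 1)) (by linarith)).tendsto_div_nhds_zero).congr'
      ?_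
    filter_upwards [eventually_gt_atTop 0] with y hy
    rw [rpow_neg hy.le, div_inv_eq_mul]
  have := (hlog.div_const (s + 1)).sub (hpow.mul_const (1 / (s + 1) ^ 2))
  simp only [zero_div, zero_mul, sub_zero] at this
  refine this.congr fun y => ?_
  ring

lemma log_mul_rpow_nonneg_of_one_lt {x : ℝ} (hx : 1 < x) : 0 ≤ log x * x ^ s :=
  mul_nonneg (log_nonneg hx.le) (rpow_nonneg (zero_le_one.trans hx.le) _)

lemma integrableOn_log_mul_rpow_Ioi_one (hs : s < -1) :
    IntegrableOn (fun x : ℝ => log x * x ^ s) (Ioi 1) :=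
  integrableOn_Ioi_deriv_of_nonneg'
    (fun x hx => hasDerivAt_rpow_mul_log_sub (by linarith) (zero_lt_one.trans_le hx))
    (fun _ hx => log_mul_rpow_nonneg_of_one_lt hx) (tendsto_rpow_mul_log_sub_atTop hs)

lemma integral_log_mul_rpow_Ioi_one (hs : s < -1) :
    ∫ x in Ioi 1, log x * x ^ s = 1 / (s + 1) ^ 2 := by
  rw [integral_Ioi_of_hasDerivAt_of_nonneg'
    (fun x hx => hasDerivAt_rpow_mul_log_sub (by linarith) (zero_lt_one.trans_le hx))
    (fun _ hx => log_mul_rpow_nonneg_of_one_lt hx) (tendsto_rpow_mul_log_sub_atTop hs)]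
  simp

end LogMulRpow

section Pareto

variable {α : ℝ}

lemma rpow_mul_paretoDensity {x : ℝ} (hx : 0 < x) (s : ℝ) :
    x ^ s * (α * x ^ (-(α + 1))) = α * x ^ (s - α - 1) := by
  rw [mul_left_comm, ← rpow_add hx, show s + -(α + 1) = s - α - 1 by ring]

lemma lintegral_pow_mul_paretoDensity_eq_top (hα : 0 < α) {n : ℕ} (hn : α ≤ n) :
    ∫⁻ x in Ioi 1, ENNReal.ofReal (x ^ n * (α * x ^ (-(α + 1)))) = ⊤ := by
  set p : ℝ := n - α - 1
  rw [setLIntegral_congr_fun measurableSet_Ioi (g := fun x => ENNReal.ofReal (α * x ^ p))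
    fun x hx => by rw [← rpow_natCast, rpow_mul_paretoDensity (zero_lt_one.trans hx)]]
  by_contra hfin
  have hint : IntegrableOn (fun x : ℝ => α * x ^ p) (Ioi 1) := by
    refine (lintegral_ofReal_ne_top_iff_integrable (by fun_prop) ?_).1 hfin
    filter_upwards [ae_restrict_mem measurableSet_Ioi] with x hx
    exact mul_nonneg hα.le (rpow_nonneg (zero_le_one.trans (le_of_lt hx)) _)
  have hpow : IntegrableOn (fun x : ℝ => x ^ p) (Ioi 1) := by
    simpa [hα.ne', IntegrableOn] using hint.const_mul α⁻¹
  rw [integrableOn_Ioi_rpow_iff one_pos] at hpow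
  linarith

lemma integral_mul_paretoDensity (hα : 1 < α) :
    ∫ x in Ioi 1, x * (α * x ^ (-(α + 1))) = α / (α - 1) := by
  rw [setIntegral_congr_fun measurableSet_Ioi (g := fun x => α * x ^ (1 - α - 1))
      fun x hx => by simpa using rpow_mul_paretoDensity (α := α) (zero_lt_one.trans hx) 1,
    integral_const_mul, integral_Ioi_rpow_of_lt (by linarith) one_pos, one_rpow]
  rw [show 1 - α - 1 + 1 = -(α - 1) by ring]
  have : α - 1 ≠ 0 := by linarith
  field_simp

lemma integral_klExp_mul_paretoDensity (hα : 0 < α) (m : ℝ) :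
    ∫ x in Ioi 1, (log x - log m + m / x - 1) * (α * x ^ (-(α + 1)))
      = 1 / α - log m + m * α / (α + 1) - 1 := by
  have hsplit : EqOn (fun x : ℝ => (log x - log m + m / x - 1) * (α * x ^ (-(α + 1))))
      (fun x => α * (log x * x ^ (-(α + 1))) - α * (log m + 1) * x ^ (-(α + 1))
        + α * m * x ^ (-(α + 2))) (Ioi 1) := by
    intro x hx
    have hx0 : 0 < x := zero_lt_one.trans hx
    have : x ^ (-(α + 2)) = x ^ (-(α + 1)) / x := by
      rw [← rpow_sub_one hx0.ne']; ring_nf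
    simp only [this]
    field_simp
    ring
  have hlog := integrableOn_log_mul_rpow_Ioi_one (s := -(α + 1)) (by linarith)
  have hp1 := integrableOn_Ioi_rpow_of_lt (a := -(α + 1)) (by linarith) one_pos
  have hp2 := integrableOn_Ioi_rpow_of_lt (a := -(α + 2)) (by linarith) one_pos
  have h1 : IntegrableOn (fun x : ℝ => α * (log x * x ^ (-(α + 1)))) (Ioi 1) := hlog.const_mul α
  have h2 : IntegrableOn (fun x : ℝ => α * (log m + 1) * x ^ (-(α + 1))) (Ioi 1) :=
    hp1.const_mul _
  have h3 : IntegrableOn (fun x : ℝ => α * m * x ^ (-(α + 2))) (Ioi 1) := hp2.const_mul _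
  rw [setIntegral_congr_fun measurableSet_Ioi hsplit,
    integral_add (f := fun x => α * (log x * x ^ (-(α + 1))) - α * (log m + 1) * x ^ (-(α + 1)))
      (h1.sub h2) h3,
    integral_sub h1 h2, integral_const_mul, integral_const_mul,
    integral_const_mul, integral_log_mul_rpow_Ioi_one (by linarith),
    integral_Ioi_rpow_of_lt (by linarith) one_pos, integral_Ioi_rpow_of_lt (by linarith) one_pos,
    one_rpow, one_rpow]
  rw [show -(α + 1) + 1 = -α by ring, show -(α + 2) + 1 = -(α + 1) by ring]
  have : α + 1 ≠ 0 := by linarith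
  field_simp
  ring

end Pareto

/-- For the Pareto second-order distribution with scale 1 and shape `3/2` over the rate
of an exponential predictive distribution: the second moment is infinite (so the
distribution has infinite variance), the mean is `λ̄ = 3`, and the entropy-based
epistemic uncertainty `∫ KL(Exp(λ) ‖ Exp(3)) dQ(λ)` equals `22/15 - log 3`. -/
theorem pareto_infinite_variance_entropy_EU :
    (∫⁻ x in Set.Ioi (1 : ℝ),
        ENNReal.ofReal (x ^ 2 * ((3 / 2 : ℝ) * x ^ (-(5 / 2) : ℝ))) = ⊤) ∧
    (∫ x in Set.Ioi (1 : ℝ), x * ((3 / 2 : ℝ) * x ^ (-(5 / 2) : ℝ)) = 3) ∧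
    (∫ x in Set.Ioi (1 : ℝ),
        (Real.log x - Real.log 3 + 3 / x - 1) * ((3 / 2 : ℝ) * x ^ (-(5 / 2) : ℝ))
      = 22 / 15 - Real.log 3) := by
  rw [show (-(5 / 2) : ℝ) = -(3 / 2 + 1) by norm_num]
  refine ⟨lintegral_pow_mul_paretoDensity_eq_top (by norm_num) (by norm_num), ?_, ?_⟩
  · rw [integral_mul_paretoDensity (by norm_num)]
    norm_num
  · rw [integral_klExp_mul_paretoDensity (by norm_num)]
    ring
end

section
/- Let Q be a probability measure on ℝ × (0,∞) with square-integrable first coordinate and integrable second coordinate, let Z be a real random variable with law P_Z satisfying E[Z] = 0 and Var[Z] > 0, and suppose v + z > 0 for (Q ⊗ P_Z)-almost all ((μ,v), z). Let Q' be the pushforward of Q ⊗ P_Z under ((μ, v), z) ↦ (μ, v + z), so Q' is a mean-preserving spread of Q. Then Var_{Q'}(μ) = Var_Q(μ) and ∫ v dQ' = ∫ v dQ; hence the variance-based epistemic uncertainty, aleatoric uncertainty, and total uncertainty of Q' for the Gaussian predictive family N(μ, v) are all equal to those of Q, so the variance-based measure violates the strict version of axiom A4. -/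
/-!
The spread only moves the variance coordinate, so the law of the mean `μ` is the same under `Q'`
as under `Q`, and with it `Var(μ)`. The variance coordinate of `Q'` is `v + Z` with `Z` independent
of `(μ, v)`, so its mean is `∫ v dQ + E[Z] = ∫ v dQ`.
-/

open MeasureTheory ProbabilityTheory

/-- The law of `(x, y + z)` when `(x, y) ∼ μ` and `z ∼ ν` are independent is
`(μ.prod ν).map spreadSnd`. -/
def spreadSnd {α β : Type*} [Add β] (q : (α × β) × β) : α × β := (q.1.1, q.1.2 + q.2)

section

variable {α β : Type*} [MeasurableSpace α] [MeasurableSpace β] [Add β] [MeasurableAdd₂ β]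

theorem measurable_spreadSnd : Measurable (spreadSnd : (α × β) × β → α × β) :=
  measurable_fst.fst.prodMk (measurable_fst.snd.add measurable_snd)

theorem map_fst_map_spreadSnd (μ : Measure (α × β)) [SFinite μ] (ν : Measure β)
    [IsProbabilityMeasure ν] :
    ((μ.prod ν).map spreadSnd).map Prod.fst = μ.map Prod.fst := by
  rw [Measure.map_map measurable_fst measurable_spreadSnd,
    show Prod.fst ∘ spreadSnd = Prod.fst ∘ (Prod.fst : (α × β) × β → α × β) from rfl,
    ← Measure.map_map measurable_fst measurable_fst, Measure.map_fst_prod, measure_univ, one_smul]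

theorem identDistrib_fst_map_spreadSnd (μ : Measure (α × β)) [SFinite μ] (ν : Measure β)
    [IsProbabilityMeasure ν] :
    IdentDistrib Prod.fst Prod.fst ((μ.prod ν).map spreadSnd) μ where
  aemeasurable_fst := measurable_fst.aemeasurable
  aemeasurable_snd := measurable_fst.aemeasurable
  map_eq := map_fst_map_spreadSnd μ ν

end

theorem integral_snd_map_spreadSnd {α E : Type*} [MeasurableSpace α]
    [NormedAddCommGroup E] [NormedSpace ℝ E] [CompleteSpace E] [MeasurableSpace E] [BorelSpace E]
    [SecondCountableTopology E]
    {μ : Measure (α × E)} [IsProbabilityMeasure μ] {ν : Measure E} [IsProbabilityMeasure ν]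
    (hμ : Integrable (fun p => p.2) μ) (hν : Integrable (fun z => z) ν) :
    ∫ p, p.2 ∂(μ.prod ν).map spreadSnd = ∫ p, p.2 ∂μ + ∫ z, z ∂ν := by
  rw [integral_map measurable_spreadSnd.aemeasurable measurable_snd.aestronglyMeasurable]
  simp only [spreadSnd]
  rw [integral_add (hμ.comp_fst ν) (hν.comp_snd μ), integral_fun_fst (fun p : α × E => p.2),
    integral_fun_snd (fun z : E => z), probReal_univ, probReal_univ, one_smul, one_smul]

theorem variance_measures_invariant_under_mean_preserving_spread_general
    (Q : Measure (ℝ × ℝ)) [IsProbabilityMeasure Q]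
    (PZ : Measure ℝ) [IsProbabilityMeasure PZ]
    (hv : Integrable (fun p : ℝ × ℝ => p.2) Q)
    (hZint : Integrable (fun z : ℝ => z) PZ)
    (hZmean : ∫ z, z ∂PZ = 0)
    (Q' : Measure (ℝ × ℝ))
    (hQ' : Q' = (Q.prod PZ).map (fun q : (ℝ × ℝ) × ℝ => (q.1.1, q.1.2 + q.2))) :
    (variance (fun p : ℝ × ℝ => p.1) Q' = variance (fun p : ℝ × ℝ => p.1) Q) ∧
    (∫ p, p.2 ∂Q' = ∫ p, p.2 ∂Q) ∧
    (variance (fun p : ℝ × ℝ => p.1) Q' + ∫ p, p.2 ∂Q'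
      = variance (fun p : ℝ × ℝ => p.1) Q + ∫ p, p.2 ∂Q) := by
  change Q' = (Q.prod PZ).map spreadSnd at hQ'
  subst hQ'
  have hEU := (identDistrib_fst_map_spreadSnd Q PZ).variance_eq
  have hAU : ∫ p, p.2 ∂(Q.prod PZ).map spreadSnd = ∫ p, p.2 ∂Q := by
    rw [integral_snd_map_spreadSnd hv hZint, hZmean, add_zero]
  exact ⟨hEU, hAU, by rw [hEU, hAU]⟩

/-- A mean-preserving spread of the variance parameter leaves all variance-based
uncertainty measures unchanged: if `Q'` is the law of `(μ, v + Z)` with `(μ,v) ∼ Q`,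
`Z ∼ P_Z` independent, `E[Z] = 0` and `Var[Z] > 0`, then the variance-based epistemic
uncertainty `Var(μ)`, aleatoric uncertainty `∫ v`, and total uncertainty of `Q'` equal
those of `Q`; hence the variance-based measure violates the strict version of A4. -/
theorem variance_measures_invariant_under_mean_preserving_spread
    (Q : Measure (ℝ × ℝ)) [IsProbabilityMeasure Q]
    (PZ : Measure ℝ) [IsProbabilityMeasure PZ]
    (hQpos : ∀ᵐ p ∂Q, 0 < p.2)
    (hμsq : Integrable (fun p : ℝ × ℝ => p.1 ^ 2) Q)
    (hμ : Integrable (fun p : ℝ × ℝ => p.1) Q)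
    (hv : Integrable (fun p : ℝ × ℝ => p.2) Q)
    (hZint : Integrable (fun z : ℝ => z) PZ)
    (hZmean : ∫ z, z ∂PZ = 0)
    (hZvar : 0 < variance id PZ)
    (hpos' : ∀ᵐ q ∂(Q.prod PZ), 0 < q.1.2 + q.2)
    (Q' : Measure (ℝ × ℝ))
    (hQ' : Q' = (Q.prod PZ).map (fun q : (ℝ × ℝ) × ℝ => (q.1.1, q.1.2 + q.2))) :
    (variance (fun p : ℝ × ℝ => p.1) Q' = variance (fun p : ℝ × ℝ => p.1) Q) ∧
    (∫ p, p.2 ∂Q' = ∫ p, p.2 ∂Q) ∧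
    (variance (fun p : ℝ × ℝ => p.1) Q' + ∫ p, p.2 ∂Q'
      = variance (fun p : ℝ × ℝ => p.1) Q + ∫ p, p.2 ∂Q) :=
  variance_measures_invariant_under_mean_preserving_spread_general Q PZ hv hZint hZmean Q' hQ'
end

section
/- Let Q be a probability measure on ℝ × (0,∞) with integrable coordinates, let Z be a random vector in ℝ² with law P_Z, integrable coordinates and E[Z] = 0, and suppose (μ,v) + z ∈ ℝ × (0,∞) for (Q ⊗ P_Z)-almost all ((μ,v), z). Let Q' be the pushforward of Q ⊗ P_Z under ((μ,v), z) ↦ (μ,v) + z (so Q' is a mean-preserving spread of Q). Then ∫ (μ,v) dQ' = ∫ (μ,v) dQ, and consequently the entropy-based total uncertainties agree: TU(Q') = ½·log(2·π·e·v̄') = ½·log(2·π·e·v̄) = TU(Q), where v̄, v̄' are the means of the second coordinate under Q, Q'. Hence the entropy-based total uncertainty satisfies the weak but not the strict version of axiom A4. -/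
open MeasureTheory Real

/-- A mean-preserving spread leaves the mean parameter, and hence the entropy-based
total uncertainty `TU(Q) = ½ log(2πe·v̄)`, unchanged: the entropy-based total
uncertainty satisfies the weak but not the strict version of axiom A4. -/
theorem entropy_TU_invariant_under_mean_preserving_spread
    (Q : Measure (ℝ × ℝ)) [IsProbabilityMeasure Q]
    (PZ : Measure (ℝ × ℝ)) [IsProbabilityMeasure PZ]
    (hQpos : ∀ᵐ p ∂Q, 0 < p.2)
    (hμ : Integrable (fun p : ℝ × ℝ => p.1) Q)
    (hv : Integrable (fun p : ℝ × ℝ => p.2) Q)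
    (hZ1 : Integrable (fun z : ℝ × ℝ => z.1) PZ)
    (hZ2 : Integrable (fun z : ℝ × ℝ => z.2) PZ)
    (hZmean1 : ∫ z, z.1 ∂PZ = 0) (hZmean2 : ∫ z, z.2 ∂PZ = 0)
    (hpos' : ∀ᵐ q ∂(Q.prod PZ), 0 < (q.1 + q.2).2)
    (Q' : Measure (ℝ × ℝ))
    (hQ' : Q' = (Q.prod PZ).map (fun q : (ℝ × ℝ) × (ℝ × ℝ) => q.1 + q.2)) :
    (∫ p, p.1 ∂Q' = ∫ p, p.1 ∂Q) ∧
    (∫ p, p.2 ∂Q' = ∫ p, p.2 ∂Q) ∧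
    ((1 / 2) * Real.log (2 * Real.pi * Real.exp 1 * ∫ p, p.2 ∂Q')
      = (1 / 2) * Real.log (2 * Real.pi * Real.exp 1 * ∫ p, p.2 ∂Q)) := by
  have hmap : Measurable (fun q : (ℝ × ℝ) × (ℝ × ℝ) => q.1 + q.2) :=
    measurable_fst.add measurable_snd
  have hfst : (Q.prod PZ).map Prod.fst = Q := by simp
  have hsnd : (Q.prod PZ).map Prod.snd = PZ := by simp
  -- integrability of the four coordinate functions on the product
  have hI1 : Integrable (fun q : (ℝ × ℝ) × (ℝ × ℝ) => q.1.1) (Q.prod PZ) := by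
    have h := hμ; rw [← hfst] at h
    exact (integrable_map_measure h.aestronglyMeasurable
      measurable_fst.aemeasurable).mp h
  have hI2 : Integrable (fun q : (ℝ × ℝ) × (ℝ × ℝ) => q.1.2) (Q.prod PZ) := by
    have h := hv; rw [← hfst] at h
    exact (integrable_map_measure h.aestronglyMeasurable
      measurable_fst.aemeasurable).mp h
  have hI1' : Integrable (fun q : (ℝ × ℝ) × (ℝ × ℝ) => q.2.1) (Q.prod PZ) := by
    have h := hZ1; rw [← hsnd] at h
    exact (integrable_map_measure h.aestronglyMeasurable
      measurable_snd.aemeasurable).mp h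
  have hI2' : Integrable (fun q : (ℝ × ℝ) × (ℝ × ℝ) => q.2.2) (Q.prod PZ) := by
    have h := hZ2; rw [← hsnd] at h
    exact (integrable_map_measure h.aestronglyMeasurable
      measurable_snd.aemeasurable).mp h
  -- integrals of coordinate functions on the product
  have e1 : ∫ q : (ℝ × ℝ) × (ℝ × ℝ), q.1.1 ∂(Q.prod PZ) = ∫ p, p.1 ∂Q := by
    conv_rhs => rw [← hfst]
    rw [integral_map measurable_fst.aemeasurable
      measurable_fst.aestronglyMeasurable]
  have e2 : ∫ q : (ℝ × ℝ) × (ℝ × ℝ), q.1.2 ∂(Q.prod PZ) = ∫ p, p.2 ∂Q := by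
    conv_rhs => rw [← hfst]
    rw [integral_map measurable_fst.aemeasurable
      measurable_snd.aestronglyMeasurable]
  have e1' : ∫ q : (ℝ × ℝ) × (ℝ × ℝ), q.2.1 ∂(Q.prod PZ) = 0 := by
    rw [← hZmean1]
    conv_rhs => rw [← hsnd]
    rw [integral_map measurable_snd.aemeasurable
      measurable_fst.aestronglyMeasurable]
  have e2' : ∫ q : (ℝ × ℝ) × (ℝ × ℝ), q.2.2 ∂(Q.prod PZ) = 0 := by
    rw [← hZmean2]
    conv_rhs => rw [← hsnd]
    rw [integral_map measurable_snd.aemeasurable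
      measurable_snd.aestronglyMeasurable]
  have h1 : ∫ p, p.1 ∂Q' = ∫ p, p.1 ∂Q := by
    rw [hQ', integral_map hmap.aemeasurable measurable_fst.aestronglyMeasurable]
    have : (fun q : (ℝ × ℝ) × (ℝ × ℝ) => (q.1 + q.2).1)
        = fun q => q.1.1 + q.2.1 := rfl
    rw [this, integral_add hI1 hI1', e1, e1', add_zero]
  have h2 : ∫ p, p.2 ∂Q' = ∫ p, p.2 ∂Q := by
    rw [hQ', integral_map hmap.aemeasurable measurable_snd.aestronglyMeasurable]
    have : (fun q : (ℝ × ℝ) × (ℝ × ℝ) => (q.1 + q.2).2)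
        = fun q => q.1.2 + q.2.2 := rfl
    rw [this, integral_add hI2 hI2', e2, e2', add_zero]
  exact ⟨h1, h2, by rw [h2]⟩
end

section
/- Let 0 < a < b and let Q = U(a, b) be the uniform distribution on (a, b), regarded as a second-order distribution over the variance parameter v of a zero-mean Gaussian predictive distribution N(0, v). Then the entropy-based epistemic uncertainty equals ∫ KL(N(0,v) ‖ N(0,v̄)) dQ(v) = ½·( log((a+b)/2) − (b·log b − a·log a)/(b−a) + 1 ), where v̄ = (a+b)/2 and KL(N(0,v) ‖ N(0,v̄)) = ½·(log(v̄/v) + v/v̄ − 1). -/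
/-!
For any law of the variance `v > 0`, `log (w / v)` splits as `log w - log v`, so the expected KL
divergence to `N(0, w)` is affine in `E[v]` and `E[log v]`; at `w = E[v]` it is the Jensen gap
`½ (log E[v] - E[log v])`. Under `U(a, b)` one has `E[v] = (a + b) / 2` and, from the
antiderivative `v log v - v`, `E[log v] = (b log b - a log a) / (b - a) - 1`.
-/

open MeasureTheory ProbabilityTheory Real Set

/-- `KL(N(0, v) ‖ N(0, w))`. -/
noncomputable def gaussianVarKL (v w : ℝ) : ℝ := (1 / 2) * (log (w / v) + v / w - 1)

theorem integral_gaussianVarKL {μ : Measure ℝ} [IsProbabilityMeasure μ]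
    (hpos : ∀ᵐ v ∂μ, 0 < v) (hid : Integrable (fun v ↦ v) μ) (hlog : Integrable log μ)
    {w : ℝ} (hw : w ≠ 0) :
    ∫ v, gaussianVarKL v w ∂μ = (1 / 2) * (log w - ∫ v, log v ∂μ + (∫ v, v ∂μ) / w - 1) := by
  have hsplit : (fun v ↦ gaussianVarKL v w) =ᵐ[μ]
      fun v ↦ (1 / 2) * ((log w - 1) - log v + w⁻¹ * v) := by
    filter_upwards [hpos] with v hv
    rw [gaussianVarKL, log_div hw hv.ne']
    ring
  have hlin : ∫ v, (log w - 1) - log v + w⁻¹ * v ∂μ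
      = (log w - 1) - ∫ v, log v ∂μ + w⁻¹ * ∫ v, v ∂μ := by
    have hconst_sub_log : Integrable (fun v ↦ (log w - 1) - log v) μ :=
      (integrable_const _).sub hlog
    rw [integral_add hconst_sub_log (hid.const_mul _),
      integral_sub (integrable_const _) hlog, integral_const_mul]
    simp only [integral_const, probReal_univ, smul_eq_mul, one_mul]
  rw [integral_congr_ae hsplit, integral_const_mul, hlin]
  ring

theorem MeasureTheory.IntegrableOn.integrable_cond {Ω E : Type*} [MeasurableSpace Ω]
    [NormedAddCommGroup E] {μ : Measure Ω} {s : Set Ω} {f : Ω → E} (hf : IntegrableOn f s μ) :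
    Integrable f μ[|s] := by
  by_cases hs : μ s = 0
  · simp [ProbabilityTheory.cond, Measure.restrict_eq_zero.mpr hs]
  · exact hf.smul_measure (ENNReal.inv_ne_top.mpr hs)

section Uniform

variable {a b : ℝ}

theorem cond_volume_Ioo :
    volume[|Ioo a b] = (ENNReal.ofReal (b - a))⁻¹ • volume.restrict (Ioo a b) := by
  rw [ProbabilityTheory.cond, Real.volume_Ioo]

theorem isProbabilityMeasure_cond_volume_Ioo (hab : a < b) :
    IsProbabilityMeasure volume[|Ioo a b] :=
  cond_isProbabilityMeasure_of_finite (by simpa using hab) (by simp)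

theorem integral_cond_volume_Ioo (f : ℝ → ℝ) (hab : a ≤ b) :
    ∫ x, f x ∂volume[|Ioo a b] = (b - a)⁻¹ * ∫ x in a..b, f x := by
  rw [cond_volume_Ioo, integral_smul_measure, ENNReal.toReal_inv,
    ENNReal.toReal_ofReal (sub_nonneg.mpr hab), smul_eq_mul, ← integral_Ioc_eq_integral_Ioo,
    intervalIntegral.integral_of_le hab]

theorem ContinuousOn.integrable_cond_volume_Ioo {f : ℝ → ℝ} (hf : ContinuousOn f (Icc a b)) :
    Integrable f volume[|Ioo a b] :=
  (hf.integrableOn_Icc.mono_set Ioo_subset_Icc_self).integrable_cond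

theorem integral_id_cond_volume_Ioo (hab : a < b) : ∫ x, x ∂volume[|Ioo a b] = (a + b) / 2 := by
  rw [integral_cond_volume_Ioo _ hab.le, integral_id]
  field_simp [(sub_pos.mpr hab).ne']
  ring

theorem integral_log_cond_volume_Ioo (hab : a < b) :
    ∫ x, log x ∂volume[|Ioo a b] = (b * log b - a * log a) / (b - a) - 1 := by
  rw [integral_cond_volume_Ioo _ hab.le, integral_log]
  field_simp [(sub_pos.mpr hab).ne']
  ring

end Uniform

/-- For the uniform second-order distribution `U(a,b)` (with `0 < a < b`) over the
variance parameter `v` of a zero-mean Gaussian predictive distribution, the Q-mean of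
`v` is `v̄ = (a+b)/2` and the entropy-based epistemic uncertainty
`∫ KL(N(0,v) ‖ N(0,v̄)) dQ(v)`, with `KL(N(0,v) ‖ N(0,v̄)) = ½(log(v̄/v) + v/v̄ - 1)`,
equals `½(log((a+b)/2) - (b log b - a log a)/(b-a) + 1)`. -/
theorem entropy_EU_uniform (a b : ℝ) (ha : 0 < a) (hab : a < b)
    (Q : Measure ℝ) (hQ : Q = (ENNReal.ofReal (b - a))⁻¹ • volume.restrict (Set.Ioo a b)) :
    (∫ v, v ∂Q = (a + b) / 2) ∧
    (∫ v, (1 / 2) * (Real.log (((a + b) / 2) / v) + v / ((a + b) / 2) - 1) ∂Q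
      = (1 / 2) * (Real.log ((a + b) / 2)
          - (b * Real.log b - a * Real.log a) / (b - a) + 1)) := by
  rw [← cond_volume_Ioo] at hQ
  subst hQ
  have := isProbabilityMeasure_cond_volume_Ioo hab
  have hmean := integral_id_cond_volume_Ioo hab
  have hpos : ∀ᵐ v ∂volume[|Ioo a b], 0 < v :=
    ae_cond_of_forall_mem measurableSet_Ioo fun v hv ↦ ha.trans hv.1
  refine ⟨hmean, ?_⟩
  change ∫ v, gaussianVarKL v ((a + b) / 2) ∂_ = _
  rw [integral_gaussianVarKL hpos continuousOn_id.integrable_cond_volume_Ioo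
    ((continuousOn_log.mono fun x hx ↦ (ha.trans_le hx.1).ne').integrable_cond_volume_Ioo)
    (by linarith), hmean, integral_log_cond_volume_Ioo hab]
  field_simp [(sub_pos.mpr hab).ne', (add_pos ha (ha.trans hab)).ne']
  ring
end

section
/- For all real numbers 0 < a < b and every z > 0, log((a+b+2z)/2) − ((b+z)·log(b+z) − (a+z)·log(a+z))/(b−a) < log((a+b)/2) − (b·log b − a·log a)/(b−a). Equivalently, the entropy-based epistemic uncertainty of the uniform second-order distribution U(a+z, b+z) over the variance parameter of a zero-mean Gaussian predictive distribution is strictly smaller than that of U(a, b); hence the entropy-based epistemic uncertainty is not invariant under spread-preserving location shifts (violating axiom A5). -/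
/-!
Along the shift `t ↦ U(a + t, b + t)` the uncertainty has derivative
`½ (1 / m_t - (log (b + t) - log (a + t)) / (b - a))`, where `m_t` is the midpoint of
`[a + t, b + t]`. This is negative because the logarithmic mean
`(b - a) / (log (b + t) - log (a + t))` of the endpoints lies strictly below their arithmetic
mean `m_t`, so the uncertainty strictly decreases with the shift.
-/

open Real Set

/-- `EU(U(a, b))` in closed form, for `0 < a < b`. -/
noncomputable def uniformVarianceEU (a b : ℝ) : ℝ :=
  (log ((a + b) / 2) - (b * log b - a * log a) / (b - a) + 1) / 2

/-- The first term of the series of `log (1 + a)` in odd powers of `a / (a + 2)`. -/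
lemma two_mul_div_add_two_lt_log_one_add {a : ℝ} (ha : 0 < a) :
    2 * (a / (a + 2)) < log (1 + a) := by
  have h := sum_le_hasSum (Finset.range 2) (fun k _ => by positivity) (hasSum_log_one_add ha.le)
  norm_num [Finset.sum_range_succ] at h
  have : 0 < (a / (a + 2)) ^ 3 := by positivity
  linarith

/-- The logarithmic mean of `x < y` lies below their arithmetic mean. -/
lemma sub_div_midpoint_lt_log_sub_log {x y : ℝ} (hx : 0 < x) (hxy : x < y) :
    (y - x) / ((x + y) / 2) < log y - log x := by
  have h := two_mul_div_add_two_lt_log_one_add (div_pos (sub_pos.2 hxy) hx)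
  rwa [show 1 + (y - x) / x = y / x by field_simp; ring, log_div (hx.trans hxy).ne' hx.ne',
    div_add' _ _ _ hx.ne', div_div_div_cancel_right₀ hx.ne',
    show 2 * ((y - x) / (y - x + 2 * x)) = (y - x) / ((x + y) / 2) by
      rw [div_div_eq_mul_div]; ring] at h

lemma uniformVarianceEU_add_add (a b t : ℝ) :
    uniformVarianceEU (a + t) (b + t) =
      (log ((a + b) / 2 + t) - ((b + t) * log (b + t) - (a + t) * log (a + t)) / (b - a) + 1)
        / 2 := by
  rw [uniformVarianceEU, show (a + t + (b + t)) / 2 = (a + b) / 2 + t by ring,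
    show b + t - (a + t) = b - a by ring]

lemma hasDerivAt_uniformVarianceEU_add_add {a b t : ℝ} (ha : 0 < a + t) (hb : 0 < b + t) :
    HasDerivAt (fun s => uniformVarianceEU (a + s) (b + s))
      ((((a + b) / 2 + t)⁻¹ - (log (b + t) - log (a + t)) / (b - a)) / 2) t := by
  simp_rw [uniformVarianceEU_add_add]
  have hlog := (hasDerivAt_log (by linarith : (a + b) / 2 + t ≠ 0)).comp_const_add _ t
  have hb' := (hasDerivAt_mul_log hb.ne').comp_const_add b t
  have ha' := (hasDerivAt_mul_log ha.ne').comp_const_add a t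
  exact (((hlog.sub ((hb'.sub ha').div_const (b - a))).add_const 1).div_const 2).congr_deriv
    (by ring)

lemma strictAntiOn_uniformVarianceEU_add_add {a b : ℝ} (hab : a < b) :
    StrictAntiOn (fun t => uniformVarianceEU (a + t) (b + t)) (Ioi (-a)) := by
  have hder (t : ℝ) (ht : -a < t) :=
    hasDerivAt_uniformVarianceEU_add_add (a := a) (b := b) (t := t) (by linarith) (by linarith)
  refine strictAntiOn_of_deriv_neg (convex_Ioi _)
    (fun t ht => (hder t ht).continuousAt.continuousWithinAt) fun t ht => ?_
  rw [interior_Ioi, mem_Ioi] at ht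
  rw [(hder t ht).deriv]
  have hmean := sub_div_midpoint_lt_log_sub_log (x := a + t) (y := b + t) (by linarith)
    (by linarith)
  have hinv : ((a + b) / 2 + t)⁻¹ < (log (b + t) - log (a + t)) / (b - a) := by
    rwa [lt_div_iff₀ (sub_pos.2 hab), inv_mul_eq_div, show b - a = b + t - (a + t) by ring,
      show (a + b) / 2 + t = (a + t + (b + t)) / 2 by ring]
  linarith

/-- A spread-preserving location shift by `z > 0` strictly decreases the entropy-based
epistemic uncertainty of the uniform second-order distribution `U(a,b)` over the variance
parameter of a zero-mean Gaussian: the entropy-based measure violates axiom A5. -/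
theorem entropy_EU_not_location_invariant (a b z : ℝ) (ha : 0 < a) (hab : a < b)
    (hz : 0 < z) :
    Real.log ((a + b + 2 * z) / 2)
        - ((b + z) * Real.log (b + z) - (a + z) * Real.log (a + z)) / (b - a)
      < Real.log ((a + b) / 2) - (b * Real.log b - a * Real.log a) / (b - a) := by
  have h := strictAntiOn_uniformVarianceEU_add_add hab (mem_Ioi.2 (neg_lt_zero.2 ha))
    (mem_Ioi.2 (by linarith)) hz
  simp only [uniformVarianceEU_add_add, add_zero] at h
  rw [uniformVarianceEU] at h
  rw [show (a + b + 2 * z) / 2 = (a + b) / 2 + z by ring]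
  linarith
end
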